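/- For every x : V → ℝ such that |x(u) - x(v)| ≠ 1 for every edge {u,v} ∈ E, the partial orientation τ(x) = {(u,v) : {u,v} ∈ E and x(v) > x(u) + 1} is a G-semiorientation. -/

import Mathlib

namespace Soap

variable {V : Type*} {W : Type*}

/-- A partial orientation of `G`: a relation `O` such that `O u v` implies `{u,v}` is an
edge and the reverse pair is not in `O`. -/
def IsPartialOrientation (G : SimpleGraph V) (O : V → V → Prop) : Prop :=
  ∀ u v, O u v → G.Adj u v ∧ ¬ O v u

/-- The edge `{u,v}` of `G` is blank for the partial orientation `O`. -/
def IsBlank (G : SimpleGraph V) (O : V → V → Prop) (u v : V) : Prop :=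
  G.Adj u v ∧ ¬ O u v ∧ ¬ O v u

/-- A `G`-semiorientation: a partial orientation such that every potential cycle
(a cycle of `G`, here traversed as `c : ZMod n → V`, none of whose edges is oriented
against the traversal) has strictly more blank edges than oriented edges. -/
def IsSemiorientation (G : SimpleGraph V) (O : V → V → Prop) : Prop :=
  IsPartialOrientation G O ∧
  ∀ (n : ℕ) (c : ZMod n → V), 3 ≤ n → Function.Injective c →
    (∀ i, G.Adj (c i) (c (i + 1))) →
    (∀ i, ¬ O (c (i + 1)) (c i)) →
    {i : ZMod n | O (c i) (c (i + 1))}.ncard <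
      {i : ZMod n | IsBlank G O (c i) (c (i + 1))}.ncard

/-- A semiorder (unit interval order) given by its strict order relation `lt`. -/
def IsSemiorder (lt : V → V → Prop) : Prop :=
  ∃ t : V → ℝ, ∀ u v, lt u v ↔ t u + 1 < t v

/-- Compatibility of a (semi)order `lt` and a partial orientation `O`:
for every edge `{u,v}`, `u < v` iff `(u,v) ∈ O`. -/
def Compatible (G : SimpleGraph V) (lt : V → V → Prop) (O : V → V → Prop) : Prop :=
  ∀ u v, G.Adj u v → (lt u v ↔ O u v)

/-- Indegree of a vertex with respect to a partial orientation. -/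
noncomputable def indeg (O : V → V → Prop) (v : V) : ℕ := {u | O u v}.ncard

/-- `n_P(v)`: the number of vertices `u` with `u < v` and `{u,v}` an edge of `G`. -/
noncomputable def nP (G : SimpleGraph V) (lt : V → V → Prop) (v : V) : ℕ :=
  {u | lt u v ∧ G.Adj u v}.ncard

/-- Degree of a vertex in a graph. -/
noncomputable def vdeg (H : SimpleGraph W) (v : W) : ℕ := {u | H.Adj v u}.ncard

/-- A configuration `c` on the graph `H` with sink `q` is superstable:
`c ≥ 0` off the sink, and no nonempty set `X` of nonsink vertices can be fired legally,
i.e. `c - Δ̃·1_X ≥ 0` fails (coordinatewise off the sink), where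
`(Δ̃·1_X)_v = deg(v)·1_X(v) - #{u ∈ X : u ∼ v}`. -/
def Superstable (H : SimpleGraph W) (q : W) (c : W → ℤ) : Prop :=
  (∀ v, v ≠ q → 0 ≤ c v) ∧
  ¬ ∃ X : Set W, X.Nonempty ∧ q ∉ X ∧
    ∀ v, v ≠ q →
      0 ≤ c v - X.indicator (fun u => (vdeg H u : ℤ)) v + ({u | u ∈ X ∧ H.Adj v u}.ncard : ℤ)

/-- `K(G)`: the graph `G` with a new vertex `none` adjoined, joined to every vertex of `G`. -/
def KG (G : SimpleGraph V) : SimpleGraph (Option V) where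
  Adj x y := x ≠ y ∧ ∀ u v, x = some u → y = some v → G.Adj u v
  symm := by
    constructor; rintro x y ⟨hne, h⟩
    exact ⟨hne.symm, fun u v hu hv => (h v u hv hu).symm⟩
  loopless := by constructor; rintro x ⟨hne, -⟩; exact hne rfl

/-- A divisor `c : V → ℤ` on `G` is quasi-superstable if the configuration
`v ↦ c v + 1` on `K(G)` (with sink the new vertex) is superstable. -/
def QuasiSuperstable (G : SimpleGraph V) (c : V → ℤ) : Prop :=
  Superstable (KG G) none (fun x => x.elim 0 (fun v => c v + 1))

/-- An acyclic orientation of `G`: a partial orientation in which every edge is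
oriented and which contains no directed cycle. -/
def IsAcyclicOrientation (G : SimpleGraph V) (O : V → V → Prop) : Prop :=
  IsPartialOrientation G O ∧ (∀ u v, G.Adj u v → O u v ∨ O v u) ∧
  ¬ ∃ (n : ℕ) (c : ZMod n → V), 0 < n ∧ Function.Injective c ∧ ∀ i, O (c i) (c (i + 1))

/-- The union of the hyperplanes `x u - x v = 1` of the `G`-semiorder arrangement. -/
def hyperplanesUnion (G : SimpleGraph V) : Set (V → ℝ) :=
  {x | ∃ u v, G.Adj u v ∧ x u - x v = 1}

/-- The regions of the `G`-semiorder arrangement: connected components of the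
complement of the union of its hyperplanes. -/
def Regions (G : SimpleGraph V) : Set (Set (V → ℝ)) :=
  {r | ∃ x, x ∉ hyperplanesUnion G ∧ r = connectedComponentIn (hyperplanesUnion G)ᶜ x}

/-- The candidate region attached to a partial orientation `O`. -/
def rho (G : SimpleGraph V) (O : V → V → Prop) : Set (V → ℝ) :=
  {x | (∀ u v, O u v → x v - x u > 1) ∧ (∀ u v, IsBlank G O u v → |x u - x v| < 1)}

/-- `K(G)₀`: the graph `G` with an edge `{v, v₀}` added for each vertex `v ≠ v₀`
not already adjacent to `v₀`. -/
def KG0 (G : SimpleGraph V) (v₀ : V) : SimpleGraph V where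
  Adj u v := G.Adj u v ∨ (u ≠ v ∧ (u = v₀ ∨ v = v₀))
  symm := by
    constructor; rintro u v (h | ⟨hne, h⟩)
    · exact Or.inl h.symm
    · exact Or.inr ⟨hne.symm, h.symm⟩
  loopless := by
    constructor; rintro v (h | ⟨hne, -⟩)
    · exact G.irrefl h
    · exact hne rfl

/-- The union of the hyperplanes of the `(G,v₀)`-semiorder arrangement. -/
def hyperplanesUnion0 (G : SimpleGraph V) (v₀ : V) : Set ({v : V // v ≠ v₀} → ℝ) :=
  {x | ∃ u v : {v : V // v ≠ v₀}, G.Adj u.1 v.1 ∧ x u - x v = 1}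

/-- The regions of the `(G,v₀)`-semiorder arrangement. -/
def Regions0 (G : SimpleGraph V) (v₀ : V) : Set (Set ({v : V // v ≠ v₀} → ℝ)) :=
  {r | ∃ x, x ∉ hyperplanesUnion0 G v₀ ∧
    r = connectedComponentIn (hyperplanesUnion0 G v₀)ᶜ x}

/-- The candidate region attached to a partial orientation `O`, in the sink context. -/
def rho0 (G : SimpleGraph V) (v₀ : V) (O : V → V → Prop) :
    Set ({v : V // v ≠ v₀} → ℝ) :=
  {x | (∀ u v : {v : V // v ≠ v₀}, O u.1 v.1 → x v - x u > 1) ∧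
    (∀ u v : {v : V // v ≠ v₀}, IsBlank G O u.1 v.1 → |x u - x v| < 1)}

/-- For every `x : V → ℝ` with `|x u - x v| ≠ 1` on every edge `{u,v}`, the partial
orientation `τ(x) = {(u,v) : {u,v} ∈ E and x v > x u + 1}` is a `G`-semiorientation. -/
theorem stmt2 {V : Type*} [Fintype V] (G : SimpleGraph V) (hconn : G.Connected)
    (x : V → ℝ) (hx : ∀ u v, G.Adj u v → |x u - x v| ≠ 1) :
    IsSemiorientation G (fun u v => G.Adj u v ∧ x u + 1 < x v) := by
  classical
  constructor
  · intro u v huv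
    exact ⟨huv.1, fun h => by linarith [huv.2, h.2]⟩
  · intro n c hn hinj hadj hback
    haveI : NeZero n := ⟨by omega⟩
    set O : V → V → Prop := fun u v => G.Adj u v ∧ x u + 1 < x v with hO
    set P : ZMod n → Prop := fun i => x (c i) + 1 < x (c (i + 1)) with hP
    have key : ∀ i : ZMod n, ¬ P i →
        IsBlank G O (c i) (c (i + 1)) ∧ |x (c i) - x (c (i + 1))| < 1 := by
      intro i h
      have hb : ¬ x (c (i + 1)) + 1 < x (c i) := fun h' => hback i ⟨(hadj i).symm, h'⟩
      have habs : |x (c i) - x (c (i + 1))| < 1 := by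
        refine lt_of_le_of_ne (abs_sub_le_iff.mpr ⟨?_, ?_⟩) (hx _ _ (hadj i))
        · simp only [hP, not_lt] at h; linarith
        · simp only [not_lt] at hb; linarith
      exact ⟨⟨hadj i, fun h' => h h'.2, fun h' => hb h'.2⟩, habs⟩
    -- the telescoping sum is zero
    have hsum : ∑ i : ZMod n, (x (c (i + 1)) - x (c i)) = 0 := by
      rw [Finset.sum_sub_distrib]
      have := Equiv.sum_comp (Equiv.addRight (1 : ZMod n)) (fun j => x (c j))
      simp only [Equiv.coe_addRight] at this
      rw [this, sub_self]
    set g : ZMod n → ℝ := fun i => if P i then 1 else -1 with hg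
    have hlt : ∀ i ∈ Finset.univ, g i < x (c (i + 1)) - x (c i) := by
      intro i _
      by_cases h : P i
      · simp only [hg, if_pos h]
        simp only [hP] at h; linarith
      · simp only [hg, if_neg h]
        have := (key i h).2
        rw [abs_sub_lt_iff] at this
        linarith [this.1]
    have hstrict : ∑ i : ZMod n, g i < 0 := by
      rw [← hsum]
      exact Finset.sum_lt_sum_of_nonempty Finset.univ_nonempty hlt
    have hgsum : ∑ i : ZMod n, g i =
        ((Finset.univ.filter P).card : ℝ) - ((Finset.univ.filter (fun i => ¬ P i)).card : ℝ) := by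
      rw [← Finset.sum_filter_add_sum_filter_not Finset.univ P g]
      have h1 : ∑ i ∈ Finset.univ.filter P, g i = ((Finset.univ.filter P).card : ℝ) := by
        have : ∀ i ∈ Finset.univ.filter P, g i = 1 := fun i hi => by
          simp only [hg, if_pos (Finset.mem_filter.mp hi).2]
        rw [Finset.sum_congr rfl this, Finset.sum_const, nsmul_eq_mul, mul_one]
      have h2 : ∑ i ∈ Finset.univ.filter (fun i => ¬ P i), g i =
          -((Finset.univ.filter (fun i => ¬ P i)).card : ℝ) := by
        have : ∀ i ∈ Finset.univ.filter (fun i => ¬ P i), g i = -1 := fun i hi => by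
          simp only [hg, if_neg (Finset.mem_filter.mp hi).2]
        rw [Finset.sum_congr rfl this, Finset.sum_const, nsmul_eq_mul, mul_neg_one]
      rw [h1, h2]; ring
    have hcard : (Finset.univ.filter P).card <
        (Finset.univ.filter (fun i => ¬ P i)).card := by
      rw [hgsum] at hstrict
      have : ((Finset.univ.filter P).card : ℝ) <
          ((Finset.univ.filter (fun i => ¬ P i)).card : ℝ) := by linarith
      exact_mod_cast this
    have hset1 : {i : ZMod n | O (c i) (c (i + 1))} = ↑(Finset.univ.filter P) := by
      ext i
      simp only [Set.mem_setOf_eq, Finset.coe_filter, Finset.mem_univ, true_and,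
        Set.mem_setOf_eq, hO, hP]
      exact ⟨fun h => h.2, fun h => ⟨hadj i, h⟩⟩
    have hset2 : {i : ZMod n | IsBlank G O (c i) (c (i + 1))} =
        ↑(Finset.univ.filter (fun i => ¬ P i)) := by
      ext i
      simp only [Set.mem_setOf_eq, Finset.coe_filter, Finset.mem_univ, true_and,
        Set.mem_setOf_eq]
      constructor
      · intro hbl hp
        exact hbl.2.1 ⟨hadj i, hp⟩
      · intro hp
        exact (key i hp).1
    rw [hset1, hset2, Set.ncard_coe_finset, Set.ncard_coe_finset]
    exact hcard

end Soap
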